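/- arXiv:2205.14021 — 3 statements merged into one kernel-verified Lean document; each statement's English description precedes it below -/
import Mathlib

section
/- Let ι be a nonempty finite index set, let (X c)_{c ∈ ι} be measurable spaces, and let p be a probability measure on the product space Π c, X c. For each c let p_c = p.map (eval c) be the c-th marginal of p. Then for every family (q c)_{c ∈ ι} of probability measures with q c on X c, D(p ‖ Measure.pi (fun c => p_c)) ≤ D(p ‖ Measure.pi q). That is, the fully factorized measure formed by the marginals of p minimizes the Kullback–Leibler divergence from p over all product measures indexed by ι. (This is the statement of Lemma 2 of the paper when each cluster is a single coordinate: the clustered PMBM-type density that minimizes the KLD factorizes into the cluster marginals.) -/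
/-!
Write `m` for the product of the marginals `p_c` of `p`. If `p ≪ π q`, then every `p_c ≪ q_c`,
`π m` has density `∏ c, dp_c/dq_c (x c)` with respect to `π q`, and this density is `p`-a.e.
positive, so `p ≪ π m`. The chain rule for Radon–Nikodym derivatives then splits, `p`-a.e.,
`log dp/dπq = log dp/dπm + ∑ c, log dp_c/dq_c (x c)`.
Log-likelihood ratios have integrable negative parts, so integrability of the left-hand side
forces integrability of every term, and integrating gives
`D(p ‖ π q) = D(p ‖ π m) + ∑ c, D(p_c ‖ q_c) ≥ D(p ‖ π m)` by Gibbs' inequality.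
-/

open MeasureTheory ProbabilityTheory

/- Kullback–Leibler divergence between two measures (Mathlib's `klDiv` convention):
`∫ log (dμ/dν) dμ` when `μ ≪ ν` and the log-likelihood ratio is integrable, `+∞` otherwise. -/
open scoped Classical in
noncomputable def klDiv {α : Type*} [MeasurableSpace α] (μ ν : Measure α) : EReal :=
  if μ ≪ ν ∧ Integrable (llr μ ν) μ then ((∫ x, llr μ ν x ∂μ : ℝ) : EReal) else ⊤

open scoped ENNReal

theorem abs_le_abs_sum_add_sum_max_neg {ι : Type*} [Fintype ι] (a : ι → ℝ) (i : ι) :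
    |a i| ≤ |∑ j, a j| + ∑ j, max (-a j) 0 := by
  classical
  have h_neg : ∀ s : Finset ι, -∑ j ∈ s, a j ≤ ∑ j, max (-a j) 0 := fun s =>
    calc -∑ j ∈ s, a j = ∑ j ∈ s, -a j := by rw [Finset.sum_neg_distrib]
      _ ≤ ∑ j ∈ s, max (-a j) 0 := Finset.sum_le_sum fun j _ => le_max_left _ _
      _ ≤ ∑ j, max (-a j) 0 :=
        Finset.sum_le_sum_of_subset_of_nonneg (Finset.subset_univ s) fun j _ _ => le_max_right _ _
  have h_split := Finset.add_sum_erase Finset.univ a (Finset.mem_univ i)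
  have h_self : -a i ≤ ∑ j, max (-a j) 0 := by simpa using h_neg {i}
  have h_rest := h_neg (Finset.univ.erase i)
  rw [abs_le]
  constructor <;> linarith [abs_nonneg (∑ j, a j), le_abs_self (∑ j, a j)]

theorem MeasureTheory.Integrable.of_integrable_sum_of_integrable_neg_part {α ι : Type*}
    [MeasurableSpace α] {μ : Measure α} [Fintype ι] {u : ι → α → ℝ}
    (hu : ∀ i, AEStronglyMeasurable (u i) μ)
    (h_neg : ∀ i, Integrable (fun x => max (-u i x) 0) μ)
    (h_sum : Integrable (fun x => ∑ i, u i x) μ) (i : ι) : Integrable (u i) μ :=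
  (h_sum.abs.add (integrable_finsetSum _ fun j _ => h_neg j)).mono' (hu i)
    (.of_forall fun x => by simpa using abs_le_abs_sum_add_sum_max_neg (u · x) i)

section RadonNikodym

variable {α : Type*} [MeasurableSpace α] {μ ν ρ : Measure α}

theorem MeasureTheory.Measure.AbsolutelyContinuous.withDensity_of_ae_ne_zero {f : α → ℝ≥0∞}
    (hf : AEMeasurable f ν) (hμν : μ ≪ ν) (hf_ne : ∀ᵐ x ∂μ, f x ≠ 0) : μ ≪ ν.withDensity f := by
  refine Measure.AbsolutelyContinuous.mk fun s hs hs0 => ?_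
  rw [withDensity_apply_eq_zero' hf] at hs0
  refine measure_mono_null (fun x hx => ?_) (measure_union_null (hμν hs0) (ae_iff.1 hf_ne))
  by_cases hfx : f x = 0
  · exact Or.inr (by simpa using hfx)
  · exact Or.inl ⟨hfx, hx⟩

theorem integrable_neg_part_llr [SigmaFinite μ] [IsFiniteMeasure ν] (hμν : μ ≪ ν) :
    Integrable (fun x => max (-llr μ ν x) 0) μ := by
  refine (Measure.integrable_toReal_rnDeriv.congr (exp_neg_llr hμν).symm).mono'
    ((measurable_llr μ ν).neg.max measurable_const).aestronglyMeasurable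
    (.of_forall fun x => ?_)
  rw [Real.norm_of_nonneg (le_max_right _ _)]
  exact max_le (by linarith [Real.add_one_le_exp (-llr μ ν x)]) (Real.exp_pos _).le

theorem integral_llr_nonneg [IsProbabilityMeasure μ] [IsProbabilityMeasure ν] (hμν : μ ≪ ν)
    (h_int : Integrable (llr μ ν) μ) : 0 ≤ ∫ x, llr μ ν x ∂μ := by
  simpa using InformationTheory.integral_llr_add_sub_measure_univ_nonneg hμν h_int

theorem integral_llr_map_comp_nonneg {β : Type*} [MeasurableSpace β] {ν : Measure β}
    [IsProbabilityMeasure μ] [IsProbabilityMeasure ν] {f : α → β} (hf : Measurable f)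
    (h : μ.map f ≪ ν) (h_int : Integrable (fun x => llr (μ.map f) ν (f x)) μ) :
    0 ≤ ∫ x, llr (μ.map f) ν (f x) ∂μ := by
  have : IsProbabilityMeasure (μ.map f) := Measure.isProbabilityMeasure_map hf.aemeasurable
  rw [← integral_map hf.aemeasurable (stronglyMeasurable_llr _ _).aestronglyMeasurable]
  exact integral_llr_nonneg h ((integrable_map_measure
    (stronglyMeasurable_llr _ _).aestronglyMeasurable hf.aemeasurable).2 h_int)

theorem llr_ae_eq_llr_add_llr [SigmaFinite μ] [SigmaFinite ν] [SigmaFinite ρ]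
    (hμν : μ ≪ ν) (hνρ : ν ≪ ρ) : llr μ ρ =ᵐ[μ] llr μ ν + llr ν ρ := by
  filter_upwards [(hμν.trans hνρ).ae_le (Measure.rnDeriv_mul_rnDeriv hμν),
    Measure.rnDeriv_pos hμν, hμν.ae_le (Measure.rnDeriv_lt_top μ ν),
    hμν.ae_le (Measure.rnDeriv_pos hνρ), (hμν.trans hνρ).ae_le (Measure.rnDeriv_lt_top ν ρ)]
    with x hchain hμν_pos hμν_lt hνρ_pos hνρ_lt
  rw [Pi.add_apply, llr, llr, llr, ← hchain, Pi.mul_apply, ENNReal.toReal_mul,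
    Real.log_mul (ENNReal.toReal_pos hμν_pos.ne' hμν_lt.ne).ne'
      (ENNReal.toReal_pos hνρ_pos.ne' hνρ_lt.ne).ne']

end RadonNikodym

section Product

variable {ι : Type*} [Fintype ι] {X : ι → Type*} [∀ i, MeasurableSpace (X i)]

theorem lintegral_pi_prod_eq_prod (μ : ∀ i, Measure (X i)) [∀ i, IsProbabilityMeasure (μ i)]
    {f : ∀ i, X i → ℝ≥0∞} (hf : ∀ i, Measurable (f i)) :
    ∫⁻ x, ∏ i, f i (x i) ∂Measure.pi μ = ∏ i, ∫⁻ t, f i t ∂μ i := by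
  rw [lintegral_prod_eq_prod_lintegral_of_indepFun _ _
    (iIndepFun_pi fun i => (hf i).aemeasurable) fun i => (hf i).comp (measurable_pi_apply i)]
  exact Finset.prod_congr rfl fun i _ => (measurePreserving_eval μ i).lintegral_comp (hf i)

theorem pi_eq_withDensity_prod_rnDeriv (μ ν : ∀ i, Measure (X i))
    [∀ i, IsProbabilityMeasure (μ i)] [∀ i, IsProbabilityMeasure (ν i)] (h : ∀ i, μ i ≪ ν i) :
    Measure.pi μ = (Measure.pi ν).withDensity fun x => ∏ i, (μ i).rnDeriv (ν i) (x i) := by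
  refine Measure.pi_eq fun s hs => ?_
  have hbox : (Set.univ.pi s).indicator (fun x => ∏ i, (μ i).rnDeriv (ν i) (x i))
      = fun x => ∏ i, (s i).indicator ((μ i).rnDeriv (ν i)) (x i) := by
    ext x
    classical
    simp [Set.indicator_apply, Finset.prod_ite_zero]
  rw [withDensity_apply _ (.univ_pi hs), ← lintegral_indicator (.univ_pi hs), hbox,
    lintegral_pi_prod_eq_prod ν fun i => ((μ i).measurable_rnDeriv (ν i)).indicator (hs i)]
  refine Finset.prod_congr rfl fun i _ => ?_
  rw [lintegral_indicator (hs i), Measure.setLIntegral_rnDeriv (h i)]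

instance isProbabilityMeasure_map_eval (p : Measure (∀ i, X i)) [IsProbabilityMeasure p] (i : ι) :
    IsProbabilityMeasure (p.map (Function.eval i)) :=
  Measure.isProbabilityMeasure_map (measurable_pi_apply i).aemeasurable

theorem measurable_prod_rnDeriv (μ ν : ∀ i, Measure (X i)) :
    Measurable fun x : ∀ i, X i => ∏ i, (μ i).rnDeriv (ν i) (x i) :=
  Finset.measurable_prod _ fun i _ => (Measure.measurable_rnDeriv _ _).comp (measurable_pi_apply i)

theorem pi_absolutelyContinuous_pi {μ ν : ∀ i, Measure (X i)}
    [∀ i, IsProbabilityMeasure (μ i)] [∀ i, IsProbabilityMeasure (ν i)] (h : ∀ i, μ i ≪ ν i) :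
    Measure.pi μ ≪ Measure.pi ν :=
  pi_eq_withDensity_prod_rnDeriv μ ν h ▸ withDensity_absolutelyContinuous _ _

theorem llr_pi_ae_eq_sum {μ ν : ∀ i, Measure (X i)}
    [∀ i, IsProbabilityMeasure (μ i)] [∀ i, IsProbabilityMeasure (ν i)] (h : ∀ i, μ i ≪ ν i) :
    llr (Measure.pi μ) (Measure.pi ν) =ᵐ[Measure.pi μ] fun x => ∑ i, llr (μ i) (ν i) (x i) := by
  have h_pos : ∀ᵐ x ∂Measure.pi μ, ∀ i, 0 < (μ i).rnDeriv (ν i) (x i) ∧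
      (μ i).rnDeriv (ν i) (x i) < ∞ := ae_all_iff.2 fun i =>
    (measurePreserving_eval μ i).quasiMeasurePreserving.ae
      ((Measure.rnDeriv_pos (h i)).and ((h i).ae_le (Measure.rnDeriv_lt_top _ _)))
  have h_dens := (pi_absolutelyContinuous_pi h).ae_le (pi_eq_withDensity_prod_rnDeriv μ ν h ▸
    Measure.rnDeriv_withDensity (Measure.pi ν) (measurable_prod_rnDeriv μ ν))
  filter_upwards [h_pos, h_dens] with x hx hx_dens
  rw [llr, hx_dens, ENNReal.toReal_prod,
    Real.log_prod fun i _ => (ENNReal.toReal_pos (hx i).1.ne' (hx i).2.ne).ne']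
  rfl

theorem llr_ae_eq_llr_pi_add_sum {p : Measure (∀ i, X i)} [IsFiniteMeasure p]
    {μ ν : ∀ i, Measure (X i)} [∀ i, IsProbabilityMeasure (μ i)] [∀ i, IsProbabilityMeasure (ν i)]
    (hpμ : p ≪ Measure.pi μ) (h : ∀ i, μ i ≪ ν i) :
    llr p (Measure.pi ν) =ᵐ[p] fun x => llr p (Measure.pi μ) x + ∑ i, llr (μ i) (ν i) (x i) := by
  filter_upwards [llr_ae_eq_llr_add_llr hpμ (pi_absolutelyContinuous_pi h),
    hpμ.ae_le (llr_pi_ae_eq_sum h)] with x h_chain h_pi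
  rw [h_chain, Pi.add_apply, h_pi]

theorem map_eval_absolutelyContinuous {p : Measure (∀ i, X i)} {q : ∀ i, Measure (X i)}
    [∀ i, IsProbabilityMeasure (q i)] (h : p ≪ Measure.pi q) (i : ι) :
    p.map (Function.eval i) ≪ q i :=
  (measurePreserving_eval q i).map_eq ▸ h.map (measurable_pi_apply i)

theorem absolutelyContinuous_pi_map_eval {p : Measure (∀ i, X i)} [IsProbabilityMeasure p]
    {q : ∀ i, Measure (X i)} [∀ i, IsProbabilityMeasure (q i)] (h : p ≪ Measure.pi q) :
    p ≪ Measure.pi fun i => p.map (Function.eval i) := by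
  have h_marg := map_eval_absolutelyContinuous h
  rw [pi_eq_withDensity_prod_rnDeriv _ q h_marg]
  refine h.withDensity_of_ae_ne_zero (measurable_prod_rnDeriv _ _).aemeasurable ?_
  have h_pos := ae_all_iff.2 fun i =>
    ae_of_ae_map (measurable_pi_apply i).aemeasurable (Measure.rnDeriv_pos (h_marg i))
  filter_upwards [h_pos] with x hx using Finset.prod_ne_zero_iff.2 fun i _ => (hx i).ne'

end Product

theorem pi_marginals_minimize_klDiv_general {ι : Type*} [Fintype ι]
    {X : ι → Type*} [∀ c, MeasurableSpace (X c)]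
    (p : Measure (∀ c, X c)) [IsProbabilityMeasure p]
    (q : ∀ c, Measure (X c)) [∀ c, IsProbabilityMeasure (q c)] :
    klDiv p (Measure.pi fun c => p.map (Function.eval c)) ≤ klDiv p (Measure.pi q) := by
  by_cases h_fin : p ≪ Measure.pi q ∧ Integrable (llr p (Measure.pi q)) p
  swap
  · simp only [klDiv, if_neg h_fin, le_top]
  obtain ⟨hpq, h_int⟩ := h_fin
  set m := fun c => p.map (Function.eval c)
  have hpm : p ≪ Measure.pi m := absolutelyContinuous_pi_map_eval hpq
  have hmq : ∀ c, m c ≪ q c := map_eval_absolutelyContinuous hpq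
  have h_split := llr_ae_eq_llr_pi_add_sum hpm hmq
  let u : Option ι → (∀ c, X c) → ℝ := fun o x =>
    o.elim (llr p (Measure.pi m) x) fun c => llr (m c) (q c) (x c)
  have h_parts := Integrable.of_integrable_sum_of_integrable_neg_part (u := u)
    (Option.forall.2 ⟨(stronglyMeasurable_llr _ _).aestronglyMeasurable, fun c =>
      ((measurable_llr _ _).comp (measurable_pi_apply c)).aestronglyMeasurable⟩)
    (Option.forall.2 ⟨integrable_neg_part_llr hpm, fun c =>
      (integrable_neg_part_llr (hmq c)).comp_measurable (measurable_pi_apply c)⟩)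
    (h_int.congr (by simpa [u, Fintype.sum_option] using h_split))
  have h_int_m : Integrable (llr p (Measure.pi m)) p := h_parts none
  have h_int_coord : ∀ c, Integrable (fun x => llr (m c) (q c) (x c)) p := fun c => h_parts (some c)
  rw [klDiv, klDiv, if_pos ⟨hpm, h_int_m⟩, if_pos ⟨hpq, h_int⟩, EReal.coe_le_coe_iff,
    integral_congr_ae h_split,
    integral_add h_int_m (integrable_finsetSum _ fun c _ => h_int_coord c),
    integral_finsetSum _ fun c _ => h_int_coord c]
  exact le_add_of_nonneg_right <| Finset.sum_nonneg fun c _ =>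
    integral_llr_map_comp_nonneg (measurable_pi_apply c) (hmq c) (h_int_coord c)

/-- The fully factorized measure formed by the marginals of `p` minimizes the KL divergence
from `p` over all product measures. -/
theorem pi_marginals_minimize_klDiv {ι : Type*} [Fintype ι] [Nonempty ι]
    {X : ι → Type*} [∀ c, MeasurableSpace (X c)]
    (p : Measure (∀ c, X c)) [IsProbabilityMeasure p]
    (q : ∀ c, Measure (X c)) [∀ c, IsProbabilityMeasure (q c)] :
    klDiv p (Measure.pi fun c => p.map (Function.eval c)) ≤ klDiv p (Measure.pi q) :=
  pi_marginals_minimize_klDiv_general p q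
end

section
/- For r ∈ [0,1] and a probability measure μ on a measurable space α, let Ber(r, μ) denote the probability measure (1−r)·δ_none + r·(μ.map some) on Option α. Let f₁ = Ber(r₁, μ₁) and f₂ = Ber(r₂, μ₂) with r₁ ∈ [0,1] and r₂ ∈ (0,1). Then D(f₁ ‖ f₂) = (1−r₁)·log((1−r₁)/(1−r₂)) + r₁·log(r₁/r₂) + r₁·D(μ₁ ‖ μ₂), where the terms 0·log 0 and 0·log(0/c) are interpreted as 0. (This decomposition of the Kullback–Leibler divergence between two Bernoulli random finite set distributions into a binary KL term plus the weighted divergence of the state densities is the general form behind Lemma 5 of the paper.) -/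
open MeasureTheory ProbabilityTheory

/-- The natural measurable space on `Option α`, transferred from `α ⊕ PUnit`. -/
instance {α : Type*} [MeasurableSpace α] : MeasurableSpace (Option α) :=
  MeasurableSpace.comap (Equiv.optionEquivSumPUnit.{0, _} α) inferInstance

/-- Bernoulli random finite set distribution with existence probability `r` and state
density `μ`, modeled as a measure on `Option α` (`none` = empty set). -/
noncomputable def Ber {α : Type*} [MeasurableSpace α] (r : ℝ) (μ : Measure α) :
    Measure (Option α) :=
  ENNReal.ofReal (1 - r) • Measure.dirac (none : Option α) + ENNReal.ofReal r • μ.map some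

/-!
On `{none}` the laws `Ber r₁ μ₁` and `Ber r₂ μ₂` have masses `1 - r₁` and `1 - r₂`, and on the
range of `some` they are `r₁ • μ₁` and `r₂ • μ₂` transported by `some`. So when `μ₁ ≪ μ₂` (or
`r₁ = 0`) the first has density `(1 - r₁) / (1 - r₂)` at `none` and `(r₁ / r₂) · dμ₁/dμ₂` along
`some` with respect to the second, and integrating the logarithm of this density against
`Ber r₁ μ₁` splits into the binary term plus `r₁` times the integral defining `D(μ₁ ‖ μ₂)`.
For `r₁ > 0`, absolute continuity and integrability of the log-likelihood ratio transfer in both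
directions between the pairs, so both sides are `⊤` together; for `r₁ = 0` the right-hand side
collapses because `0 * ⊤ = 0` in `EReal`.
-/

open scoped ENNReal

def MeasurableEquiv.optionEquivSumPUnit (α : Type*) [MeasurableSpace α] :
    Option α ≃ᵐ α ⊕ PUnit.{1} where
  toEquiv := Equiv.optionEquivSumPUnit.{0} α
  measurable_toFun := comap_measurable _
  measurable_invFun := by
    rintro _ ⟨t, ht, rfl⟩
    simpa only [Equiv.symm_preimage_preimage] using ht

lemma Filter.EventuallyEq.eq_of_measure_singleton_ne_zero {α β : Type*} [MeasurableSpace α]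
    {μ : Measure α} {f g : α → β} (h : f =ᵐ[μ] g) {a : α} (ha : μ {a} ≠ 0) : f a = g a :=
  not_not.1 fun hne => ha (measure_mono_null (Set.singleton_subset_iff.2 hne) h)

section MeasureTheoryAux

variable {α β : Type*} [MeasurableSpace α] [MeasurableSpace β]

lemma measurableEmbedding_inl : MeasurableEmbedding (Sum.inl : α → α ⊕ β) :=
  ⟨Sum.inl_injective, measurable_inl, fun _ hs => hs.inl_image⟩

lemma measurableEmbedding_some : MeasurableEmbedding (some : α → Option α) :=
  (MeasurableEquiv.optionEquivSumPUnit α).symm.measurableEmbedding.comp measurableEmbedding_inl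

lemma Measurable.option_elim (b : β) {f : α → β} (hf : Measurable f) :
    Measurable fun x : Option α => x.elim b f := by
  have h : (fun x : Option α => x.elim b f)
      = Sum.elim f (fun _ => b) ∘ MeasurableEquiv.optionEquivSumPUnit α := by
    ext (_ | _) <;> rfl
  rw [h]
  exact (hf.sumElim measurable_const).comp (MeasurableEquiv.optionEquivSumPUnit α).measurable

lemma MeasureTheory.Measure.withDensity_dirac' {a : α} {g : α → ℝ≥0∞} (hg : Measurable g) :
    (Measure.dirac a).withDensity g = g a • Measure.dirac a := by
  ext s hs
  classical
  rw [withDensity_apply _ hs, setLIntegral_dirac' hg hs, Measure.smul_apply,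
    Measure.dirac_apply' _ hs, smul_eq_mul]
  by_cases h : a ∈ s <;> simp [h]

lemma MeasurableEmbedding.withDensity_map {f : α → β} (hf : MeasurableEmbedding f)
    (μ : Measure α) (g : β → ℝ≥0∞) :
    (μ.map f).withDensity g = (μ.withDensity (g ∘ f)).map f := by
  ext s hs
  rw [withDensity_apply _ hs, hf.map_apply, withDensity_apply _ (hf.measurable hs),
    hf.restrict_map, hf.lintegral_map]
  rfl

end MeasureTheoryAux

section Ber

variable {α : Type*} [MeasurableSpace α] {r r₁ r₂ : ℝ} {μ μ₁ μ₂ : Measure α}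

lemma ber_zero (μ : Measure α) : Ber 0 μ = Measure.dirac none := by
  simp [Ber]

instance isFiniteMeasure_ber (r : ℝ) (μ : Measure α) [IsFiniteMeasure μ] :
    IsFiniteMeasure (Ber r μ) :=
  ⟨by simp [Ber, measurableEmbedding_some.map_apply, ENNReal.mul_lt_top]⟩

lemma ber_apply_singleton_none (r : ℝ) (μ : Measure α) :
    Ber r μ {none} = ENNReal.ofReal (1 - r) := by
  simp [Ber, measurableEmbedding_some.map_apply, Set.preimage_eq_empty]

lemma ber_apply_image_some (r : ℝ) (μ : Measure α) {s : Set α} (hs : MeasurableSet s) :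
    Ber r μ (some '' s) = ENNReal.ofReal r * μ s := by
  simp [Ber, measurableEmbedding_some.map_apply, measurableEmbedding_some.measurableSet_image.2 hs,
    Set.preimage_image_eq s (Option.some_injective α)]

lemma map_some_absolutelyContinuous_ber (hr : 0 < r) : μ.map some ≪ Ber r μ :=
  (Measure.absolutelyContinuous_smul (ENNReal.ofReal_pos.2 hr).ne').trans
    (Measure.absolutelyContinuous_of_le (Measure.le_add_left le_rfl))

lemma absolutelyContinuous_of_ber (hr₁ : 0 < r₁) (h : Ber r₁ μ₁ ≪ Ber r₂ μ₂) : μ₁ ≪ μ₂ := by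
  refine Measure.AbsolutelyContinuous.mk fun s hs hs₂ => ?_
  have hs₁ := h (by rw [ber_apply_image_some r₂ μ₂ hs, hs₂, mul_zero])
  rw [ber_apply_image_some r₁ μ₁ hs] at hs₁
  exact (mul_eq_zero.1 hs₁).resolve_left (ENNReal.ofReal_pos.2 hr₁).ne'

lemma withDensity_ber {g : Option α → ℝ≥0∞} (hg : Measurable g) :
    (Ber r μ).withDensity g
      = (ENNReal.ofReal (1 - r) * g none) • Measure.dirac none
        + ENNReal.ofReal r • (μ.withDensity (g ∘ some)).map some := by
  rw [Ber, withDensity_add_measure, withDensity_smul_measure, withDensity_smul_measure,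
    Measure.withDensity_dirac' hg, measurableEmbedding_some.withDensity_map, smul_smul]

end Ber

section BerIntegral

variable {α E : Type*} [MeasurableSpace α] [NormedAddCommGroup E] {r : ℝ} {μ : Measure α}
  {f : Option α → E}

lemma integrable_ber_iff (hf : StronglyMeasurable f) (hr : 0 < r) :
    Integrable f (Ber r μ) ↔ Integrable (fun a => f (some a)) μ := by
  rw [Ber, integrable_add_measure, integrable_smul_measure (ENNReal.ofReal_pos.2 hr).ne'
    ENNReal.ofReal_ne_top, measurableEmbedding_some.integrable_map_iff]
  exact and_iff_right ((integrable_dirac' hf enorm_lt_top).smul_measure ENNReal.ofReal_ne_top)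

lemma integral_ber [NormedSpace ℝ E] [CompleteSpace E] (hr : r ∈ Set.Icc 0 1)
    (hf : StronglyMeasurable f) (hfi : Integrable f (Ber r μ)) :
    ∫ x, f x ∂(Ber r μ) = (1 - r) • f none + r • ∫ a, f (some a) ∂μ := by
  rw [Ber, integrable_add_measure] at hfi
  rw [Ber, integral_add_measure hfi.1 hfi.2, integral_smul_measure, integral_smul_measure,
    integral_dirac' _ _ hf, measurableEmbedding_some.integral_map,
    ENNReal.toReal_ofReal hr.1, ENNReal.toReal_ofReal (sub_nonneg.2 hr.2)]

end BerIntegral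

section BerDensity

variable {α : Type*} [MeasurableSpace α] {r₁ r₂ : ℝ} {μ₁ μ₂ : Measure α}

noncomputable def berDensity (r₁ r₂ : ℝ) (μ₁ μ₂ : Measure α) : Option α → ℝ≥0∞ :=
  fun x => x.elim (ENNReal.ofReal (1 - r₁) / ENNReal.ofReal (1 - r₂))
    (fun a => ENNReal.ofReal r₁ / ENNReal.ofReal r₂ * μ₁.rnDeriv μ₂ a)

lemma measurable_berDensity : Measurable (berDensity r₁ r₂ μ₁ μ₂) :=
  (measurable_const.mul (Measure.measurable_rnDeriv μ₁ μ₂)).option_elim _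

lemma ber_eq_withDensity [SigmaFinite μ₁] [SigmaFinite μ₂] (hr₂ : r₂ ∈ Set.Ioo 0 1)
    (h : μ₁ ≪ μ₂ ∨ r₁ = 0) :
    Ber r₁ μ₁ = (Ber r₂ μ₂).withDensity (berDensity r₁ r₂ μ₁ μ₂) := by
  have hr₂_ne : ENNReal.ofReal r₂ ≠ 0 := (ENNReal.ofReal_pos.2 hr₂.1).ne'
  have hr₂_ne' : ENNReal.ofReal (1 - r₂) ≠ 0 := (ENNReal.ofReal_pos.2 (by linarith [hr₂.2])).ne'
  have hsome : ENNReal.ofReal r₂ • (μ₂.withDensity (berDensity r₁ r₂ μ₁ μ₂ ∘ some)).map some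
      = ENNReal.ofReal r₁ • μ₁.map some := by
    rcases h with h | rfl
    · rw [show berDensity r₁ r₂ μ₁ μ₂ ∘ some
          = (ENNReal.ofReal r₁ / ENNReal.ofReal r₂) • μ₁.rnDeriv μ₂ from rfl,
        withDensity_smul _ (Measure.measurable_rnDeriv μ₁ μ₂), Measure.withDensity_rnDeriv_eq _ _ h,
        Measure.map_smul, smul_smul, ENNReal.mul_div_cancel hr₂_ne ENNReal.ofReal_ne_top]
    · simp [berDensity, Function.comp_def]
  rw [withDensity_ber measurable_berDensity, hsome, Ber]
  simp only [berDensity, Option.elim, ENNReal.mul_div_cancel hr₂_ne' ENNReal.ofReal_ne_top]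

lemma ber_absolutelyContinuous [SigmaFinite μ₁] [SigmaFinite μ₂] (hr₂ : r₂ ∈ Set.Ioo 0 1)
    (h : μ₁ ≪ μ₂ ∨ r₁ = 0) : Ber r₁ μ₁ ≪ Ber r₂ μ₂ := by
  rw [ber_eq_withDensity hr₂ h]
  exact withDensity_absolutelyContinuous _ _

lemma rnDeriv_ber_ae_eq [SigmaFinite μ₁] [IsFiniteMeasure μ₂] (hr₂ : r₂ ∈ Set.Ioo 0 1)
    (h : μ₁ ≪ μ₂ ∨ r₁ = 0) :
    (Ber r₁ μ₁).rnDeriv (Ber r₂ μ₂) =ᵐ[Ber r₂ μ₂] berDensity r₁ r₂ μ₁ μ₂ := by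
  rw [ber_eq_withDensity hr₂ h]
  exact Measure.rnDeriv_withDensity _ measurable_berDensity

end BerDensity

section BerLLR

variable {α : Type*} [MeasurableSpace α] {r₁ r₂ : ℝ} {μ₁ μ₂ : Measure α}

lemma llr_ber_none [SigmaFinite μ₁] [IsFiniteMeasure μ₂] (hr₁ : r₁ ≤ 1)
    (hr₂ : r₂ ∈ Set.Ioo 0 1) (h : μ₁ ≪ μ₂ ∨ r₁ = 0) :
    llr (Ber r₁ μ₁) (Ber r₂ μ₂) none = Real.log ((1 - r₁) / (1 - r₂)) := by
  have hnone : Ber r₂ μ₂ {none} ≠ 0 := by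
    rw [ber_apply_singleton_none]
    exact (ENNReal.ofReal_pos.2 (by linarith [hr₂.2])).ne'
  rw [llr, (rnDeriv_ber_ae_eq hr₂ h).eq_of_measure_singleton_ne_zero hnone, berDensity,
    Option.elim, ENNReal.toReal_div, ENNReal.toReal_ofReal (by linarith),
    ENNReal.toReal_ofReal (by linarith [hr₂.2])]

lemma llr_ber_some_ae_eq [SigmaFinite μ₁] [IsFiniteMeasure μ₂] (hr₁ : 0 < r₁)
    (hr₂ : r₂ ∈ Set.Ioo 0 1) (h : μ₁ ≪ μ₂) :
    (fun a => llr (Ber r₁ μ₁) (Ber r₂ μ₂) (some a))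
      =ᵐ[μ₁] fun a => Real.log (r₁ / r₂) + llr μ₁ μ₂ a := by
  have hrnDeriv : (fun a => (Ber r₁ μ₁).rnDeriv (Ber r₂ μ₂) (some a))
      =ᵐ[μ₂] fun a => ENNReal.ofReal r₁ / ENNReal.ofReal r₂ * μ₁.rnDeriv μ₂ a :=
    measurableEmbedding_some.ae_map_iff.1
      ((map_some_absolutelyContinuous_ber hr₂.1).ae_le (rnDeriv_ber_ae_eq hr₂ (Or.inl h)))
  filter_upwards [h.ae_le hrnDeriv, Measure.rnDeriv_pos h,
    h.ae_le (Measure.rnDeriv_lt_top μ₁ μ₂)] with a ha hpos hlt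
  rw [llr, ha, ENNReal.toReal_mul, ENNReal.toReal_div, ENNReal.toReal_ofReal hr₁.le,
    ENNReal.toReal_ofReal hr₂.1.le, Real.log_mul (div_pos hr₁ hr₂.1).ne'
      (ENNReal.toReal_ne_zero.2 ⟨hpos.ne', hlt.ne⟩)]
  rfl

lemma integrable_llr_ber_iff [IsFiniteMeasure μ₁] [IsFiniteMeasure μ₂] (hr₁ : 0 < r₁)
    (hr₂ : r₂ ∈ Set.Ioo 0 1) (h : μ₁ ≪ μ₂) :
    Integrable (llr (Ber r₁ μ₁) (Ber r₂ μ₂)) (Ber r₁ μ₁) ↔ Integrable (llr μ₁ μ₂) μ₁ :=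
  (integrable_ber_iff (stronglyMeasurable_llr _ _) hr₁).trans
    ((integrable_congr (llr_ber_some_ae_eq hr₁ hr₂ h)).trans integrable_const_add_iff)

lemma integral_llr_ber [IsProbabilityMeasure μ₁] [IsFiniteMeasure μ₂] (hr₁ : r₁ ∈ Set.Ioc 0 1)
    (hr₂ : r₂ ∈ Set.Ioo 0 1) (h : μ₁ ≪ μ₂) (hint : Integrable (llr μ₁ μ₂) μ₁) :
    ∫ x, llr (Ber r₁ μ₁) (Ber r₂ μ₂) x ∂(Ber r₁ μ₁)
      = (1 - r₁) * Real.log ((1 - r₁) / (1 - r₂)) + r₁ * Real.log (r₁ / r₂)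
        + r₁ * ∫ a, llr μ₁ μ₂ a ∂μ₁ := by
  rw [integral_ber ⟨hr₁.1.le, hr₁.2⟩ (stronglyMeasurable_llr _ _)
      ((integrable_llr_ber_iff hr₁.1 hr₂ h).2 hint),
    llr_ber_none hr₁.2 hr₂ (Or.inl h), integral_congr_ae (llr_ber_some_ae_eq hr₁.1 hr₂ h),
    integral_add (integrable_const _) hint, integral_const, probReal_univ, one_smul,
    smul_eq_mul, smul_eq_mul]
  ring

end BerLLR

section KL

variable {α : Type*} [MeasurableSpace α] {μ ν : Measure α}

lemma klDiv_of_ac_of_integrable (hac : μ ≪ ν) (hint : Integrable (llr μ ν) μ) :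
    klDiv μ ν = ((∫ x, llr μ ν x ∂μ : ℝ) : EReal) :=
  if_pos ⟨hac, hint⟩

lemma klDiv_eq_top (h : ¬ (μ ≪ ν ∧ Integrable (llr μ ν) μ)) : klDiv μ ν = ⊤ :=
  if_neg h

end KL

/-- KL divergence between two Bernoulli RFS distributions: binary KL term plus the
existence-probability-weighted KL divergence of the state densities. -/
theorem klDiv_Ber_eq {α : Type*} [MeasurableSpace α]
    (r₁ r₂ : ℝ) (hr₁ : r₁ ∈ Set.Icc (0 : ℝ) 1) (hr₂ : r₂ ∈ Set.Ioo (0 : ℝ) 1)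
    (μ₁ μ₂ : Measure α) [IsProbabilityMeasure μ₁] [IsProbabilityMeasure μ₂] :
    klDiv (Ber r₁ μ₁) (Ber r₂ μ₂)
      = (((1 - r₁) * Real.log ((1 - r₁) / (1 - r₂)) + r₁ * Real.log (r₁ / r₂) : ℝ) : EReal)
        + (r₁ : EReal) * klDiv μ₁ μ₂ := by
  rcases hr₁.1.eq_or_lt with rfl | hr₁_pos
  · have hint : Integrable (llr (Ber 0 μ₁) (Ber r₂ μ₂)) (Ber 0 μ₁) := by
      rw [ber_zero]
      exact integrable_dirac' (stronglyMeasurable_llr _ _) enorm_lt_top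
    rw [klDiv_of_ac_of_integrable (ber_absolutelyContinuous hr₂ (Or.inr rfl)) hint,
      integral_ber hr₁ (stronglyMeasurable_llr _ _) hint, llr_ber_none hr₁.2 hr₂ (Or.inr rfl)]
    simp
  by_cases h : μ₁ ≪ μ₂ ∧ Integrable (llr μ₁ μ₂) μ₁
  · obtain ⟨hac, hint⟩ := h
    rw [klDiv_of_ac_of_integrable hac hint,
      klDiv_of_ac_of_integrable (ber_absolutelyContinuous hr₂ (Or.inl hac))
        ((integrable_llr_ber_iff hr₁_pos hr₂ hac).2 hint),
      integral_llr_ber ⟨hr₁_pos, hr₁.2⟩ hr₂ hac hint]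
    norm_cast
  · have hBer : ¬ (Ber r₁ μ₁ ≪ Ber r₂ μ₂ ∧ Integrable (llr (Ber r₁ μ₁) (Ber r₂ μ₂)) (Ber r₁ μ₁)) :=
      fun ⟨hB, hint⟩ =>
        have hac := absolutelyContinuous_of_ber hr₁_pos hB
        h ⟨hac, (integrable_llr_ber_iff hr₁_pos hr₂ hac).1 hint⟩
    rw [klDiv_eq_top hBer, klDiv_eq_top h, EReal.coe_mul_top_of_pos hr₁_pos,
      EReal.add_top_of_ne_bot (EReal.coe_ne_bot _)]
end

section
/- Let A be a nonempty finite index set, let (w_a)_{a ∈ A} be nonnegative weights with ∑_a w_a = 1, let (r_a)_{a ∈ A} ⊆ [0,1], and let (μ_a)_{a ∈ A} be probability measures on a measurable space α. Define r̂ = ∑_a w_a r_a and assume r̂ > 0. Then the mixture of Bernoulli random finite set distributions satisfies ∑_a w_a · ((1−r_a)·δ_none + r_a·(μ_a.map some)) = (1−r̂)·δ_none + r̂·(ν.map some), where ν = r̂⁻¹ · ∑_a w_a r_a μ_a is a probability measure on α. That is, a weighted mixture of Bernoulli random finite set distributions is itself a Bernoulli random finite set distribution whose existence probability is the weighted average of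 the existence probabilities and whose state density is the correspondingly reweighted mixture of the state densities. (This identity yields the merged existence probability (29) and merged state density in the paper's intra-track Bernoulli merging.) -/
open MeasureTheory

lemma measurable_some' {α : Type*} [MeasurableSpace α] :
    Measurable (some : α → Option α) := by
  intro s hs
  obtain ⟨t, ht, rfl⟩ := hs
  have : (some : α → Option α) ⁻¹' ((Equiv.optionEquivSumPUnit.{0, _} α) ⁻¹' t)
      = Sum.inl ⁻¹' t := rfl
  rw [this]
  exact measurable_inl ht

/-- A weighted mixture of Bernoulli RFS distributions is itself a Bernoulli RFS distribution
whose existence probability is the weighted average of the existence probabilities, and whose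
state density is the correspondingly reweighted mixture of the state densities. -/
theorem mixture_Ber_eq_Ber {α : Type*} [MeasurableSpace α] {A : Type*} [Fintype A] [Nonempty A]
    (w : A → ℝ) (hw : ∀ a, 0 ≤ w a) (hw_sum : ∑ a, w a = 1)
    (r : A → ℝ) (hr : ∀ a, r a ∈ Set.Icc (0 : ℝ) 1)
    (μ : A → Measure α) [∀ a, IsProbabilityMeasure (μ a)]
    (hr_hat : 0 < ∑ a, w a * r a) :
    IsProbabilityMeasure
      ((ENNReal.ofReal (∑ a, w a * r a))⁻¹ • ∑ a, ENNReal.ofReal (w a * r a) • μ a) ∧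
    ∑ a, ENNReal.ofReal (w a) • Ber (r a) (μ a)
      = Ber (∑ a, w a * r a)
          ((ENNReal.ofReal (∑ a, w a * r a))⁻¹ • ∑ a, ENNReal.ofReal (w a * r a) • μ a) := by
  have hwr : ∀ a, 0 ≤ w a * r a := fun a => mul_nonneg (hw a) (hr a).1
  have hkey : ENNReal.ofReal (∑ a, w a * r a) = ∑ a, ENNReal.ofReal (w a * r a) :=
    ENNReal.ofReal_sum_of_nonneg (fun a _ => hwr a)
  have hne : ENNReal.ofReal (∑ a, w a * r a) ≠ 0 := by
    simp [ENNReal.ofReal_eq_zero, not_le, hr_hat]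
  have htop : ENNReal.ofReal (∑ a, w a * r a) ≠ ⊤ := ENNReal.ofReal_ne_top
  have hsum_univ : (∑ a, ENNReal.ofReal (w a * r a) • μ a) Set.univ
      = ENNReal.ofReal (∑ a, w a * r a) := by
    rw [hkey]
    simp [Measure.finset_sum_apply, Measure.smul_apply]
  have hprob : IsProbabilityMeasure
      ((ENNReal.ofReal (∑ a, w a * r a))⁻¹ • ∑ a, ENNReal.ofReal (w a * r a) • μ a) := by
    constructor
    rw [Measure.smul_apply, hsum_univ, smul_eq_mul, ENNReal.inv_mul_cancel hne htop]
  refine ⟨hprob, ?_⟩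
  ext s hs
  have hmap : ∀ a, (μ a).map some s = μ a (some ⁻¹' s) := fun a =>
    Measure.map_apply measurable_some' hs
  have hmap' : (((ENNReal.ofReal (∑ a, w a * r a))⁻¹ •
      ∑ a, ENNReal.ofReal (w a * r a) • μ a).map some) s
      = (ENNReal.ofReal (∑ a, w a * r a))⁻¹ *
        ∑ a, ENNReal.ofReal (w a * r a) * μ a (some ⁻¹' s) := by
    rw [Measure.map_apply measurable_some' hs]
    simp [Measure.smul_apply, Measure.finset_sum_apply]
  have h1r : ENNReal.ofReal (1 - ∑ a, w a * r a)
      = ∑ a, ENNReal.ofReal (w a * (1 - r a)) := by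
    rw [← ENNReal.ofReal_sum_of_nonneg
      (fun a _ => mul_nonneg (hw a) (by linarith [(hr a).2]))]
    congr 1
    have : ∑ a, w a * (1 - r a) = ∑ a, (w a - w a * r a) := by
      apply Finset.sum_congr rfl; intro a _; ring
    rw [this, Finset.sum_sub_distrib, hw_sum]
  simp only [Ber, Measure.add_apply, Measure.smul_apply, Measure.finset_sum_apply,
    smul_eq_mul, hmap, hmap']
  rw [← mul_assoc, ENNReal.mul_inv_cancel hne htop, one_mul, h1r,
    Finset.sum_mul, ← Finset.sum_add_distrib]
  apply Finset.sum_congr rfl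
  intro a _
  rw [mul_add, ← mul_assoc, ← mul_assoc, ← ENNReal.ofReal_mul (hw a),
    ← ENNReal.ofReal_mul (hw a)]
end
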